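/- arXiv:2508.20924 — 7 statements merged into one kernel-verified Lean document; each statement's English description precedes it below -/
import Mathlib

section
/- Let Φ₁ and Φ₂ be independent random measures on a measurable space X with σ-finite mean measures M₁ and M₂, each admitting a Palm kernel {P₁^x}_{x∈X} and {P₂^x}_{x∈X} respectively. Set Φ = Φ₁ + Φ₂ and M = M₁ + M₂, so that M is the mean measure of Φ and M₁, M₂ are absolutely continuous with respect to M. Then the kernel P^x := (dM₁/dM)(x) · (P₁^x ⊕ law(Φ₂)) + (dM₂/dM)(x) · (law(Φ₁) ⊕ P₂^x) is a Palm kernel for Φ, i.e., for every measurable B ⊆ X and every measurable set L of measures on X, E[Φ(B) 1(Φ ∈ L)] = ∫_B P^x(L) M(dx). (Equivalently: the Palm version of Φ₁+Φ₂ at x is distributed as Φ₁ₓ + Φ₂ with probability (dM₁/dM)(x) and as Φ₁ + Φ₂ₓ with probability (dM₂/dM)(x).) -/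
/-!
Split `Φ(B) = Φ₁(B) + Φ₂(B)`. In `E[Φ₁(B) 1(Φ₁ + Φ₂ ∈ L)]` freeze the independent summand
`Φ₂ = φ`: the Campbell disintegration of `Φ₁`, applied to the translated set
`{μ | μ + φ ∈ L}`, gives `∫_B P₁^x {μ | μ + φ ∈ L} M₁(dx)`, and integrating `φ` against the law
of `Φ₂` turns this into `∫_B (P₁^x ⊕ law Φ₂)(L) M₁(dx)`. The second term is symmetric, and
`M_i(dx) = (dM_i/dM)(x) M(dx)` puts both on `M`.
-/

open MeasureTheory

/-- `Q₁ ⊕ Q₂`, the law of the sum of independent random measures with laws `Q₁` and `Q₂`. -/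
noncomputable def sumLaw {X : Type*} [MeasurableSpace X]
    (Q₁ Q₂ : Measure (Measure X)) : Measure (Measure X) :=
  (Q₁.prod Q₂).map (fun p => p.1 + p.2)

open ProbabilityTheory Measure

section Conv

variable {α β : Type*} [MeasurableSpace α] [MeasurableSpace β] [AddMonoid β] [MeasurableAdd₂ β]

theorem conv_apply_eq_lintegral (μ ν : Measure β) [SFinite μ] [SFinite ν] {L : Set β}
    (hL : MeasurableSet L) : (μ ∗ ν) L = ∫⁻ y, μ ((· + y) ⁻¹' L) ∂ν := by
  rw [conv, map_apply measurable_add hL, prod_apply_symm (measurable_add hL)]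
  rfl

theorem ProbabilityTheory.Kernel.measurable_apply_preimage_add_right (κ : Kernel α β)
    [IsSFiniteKernel κ] {L : Set β} (hL : MeasurableSet L) :
    Measurable fun p : α × β => κ p.1 ((· + p.2) ⁻¹' L) :=
  Kernel.measurable_kernel_prodMk_left (κ := Kernel.prodMkRight β κ)
    (t := {q : (α × β) × β | q.2 + q.1.2 ∈ L}) ((measurable_snd.add measurable_fst.snd) hL)

theorem ProbabilityTheory.Kernel.measurable_conv_apply (κ : Kernel α β) [IsSFiniteKernel κ]
    (ν : Measure β) [SFinite ν] {L : Set β} (hL : MeasurableSet L) :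
    Measurable fun x => (κ x ∗ ν) L := by
  simp_rw [conv_apply_eq_lintegral _ _ hL]
  exact (κ.measurable_apply_preimage_add_right hL).lintegral_prod_right'

end Conv

theorem sumLaw_eq_conv {X : Type*} [MeasurableSpace X] (Q₁ Q₂ : Measure (Measure X)) :
    sumLaw Q₁ Q₂ = Q₁ ∗ Q₂ :=
  rfl

section Campbell

variable {Ω X : Type*} [MeasurableSpace Ω] [MeasurableSpace X]

theorem lintegral_add_apply_mul_indicator {P : Measure Ω} {Φ₁ Φ₂ : Ω → Measure X}
    (hΦ₁ : Measurable Φ₁) (hΦ₂ : Measurable Φ₂) {B : Set X} (hB : MeasurableSet B)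
    {L : Set (Measure X)} (hL : MeasurableSet L) :
    ∫⁻ ω, (Φ₁ ω + Φ₂ ω) B * L.indicator (fun _ => 1) (Φ₁ ω + Φ₂ ω) ∂P
      = ∫⁻ ω, Φ₁ ω B * L.indicator (fun _ => 1) (Φ₁ ω + Φ₂ ω) ∂P
        + ∫⁻ ω, Φ₂ ω B * L.indicator (fun _ => 1) (Φ₂ ω + Φ₁ ω) ∂P := by
  rw [← lintegral_add_left]
  · refine lintegral_congr fun ω => ?_
    rw [Measure.add_apply, add_mul, add_comm (Φ₂ ω)]
  · exact ((measurable_coe hB).comp hΦ₁).mul ((measurable_const.indicator hL).comp (hΦ₁.add hΦ₂))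

def CampbellIdentity (P : Measure Ω) (Φ : Ω → Measure X) (M : Measure X)
    (K : X → Measure (Measure X)) : Prop :=
  ∀ B : Set X, MeasurableSet B → ∀ L : Set (Measure X), MeasurableSet L →
    ∫⁻ ω, Φ ω B * L.indicator (fun _ => (1 : ENNReal)) (Φ ω) ∂P = ∫⁻ x in B, K x L ∂M

theorem CampbellIdentity.lintegral_mul_indicator_add [IsFiniteMeasure P]
    {Φ₁ Φ₂ : Ω → Measure X} (hΦ₁ : Measurable Φ₁) (hΦ₂ : Measurable Φ₂)
    (hIndep : IndepFun Φ₁ Φ₂ P) {M : Measure X} [SFinite M]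
    {κ : Kernel X (Measure X)} [IsSFiniteKernel κ] (hκ : CampbellIdentity P Φ₁ M κ)
    {B : Set X} (hB : MeasurableSet B) {L : Set (Measure X)} (hL : MeasurableSet L) :
    ∫⁻ ω, Φ₁ ω B * L.indicator (fun _ => 1) (Φ₁ ω + Φ₂ ω) ∂P
      = ∫⁻ x in B, (κ x ∗ P.map Φ₂) L ∂M := by
  have hF : Measurable fun p : Measure X × Measure X =>
      p.1 B * L.indicator (fun _ => 1) (p.1 + p.2) :=
    ((measurable_coe hB).comp measurable_fst).mul
      ((measurable_const.indicator hL).comp measurable_add)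
  have hShift (φ : Measure X) : MeasurableSet ((· + φ) ⁻¹' L) := (measurable_add_const φ) hL
  have hCampbell (φ : Measure X) :
      ∫⁻ μ, μ B * L.indicator (fun _ => 1) (μ + φ) ∂(P.map Φ₁)
        = ∫⁻ x in B, κ x ((· + φ) ⁻¹' L) ∂M :=
    (lintegral_map (f := fun μ => μ B * ((· + φ) ⁻¹' L).indicator (fun _ => 1) μ)
      ((measurable_coe hB).mul (measurable_const.indicator (hShift φ))) hΦ₁).trans
      (hκ B hB _ (hShift φ))
  calc ∫⁻ ω, Φ₁ ω B * L.indicator (fun _ => 1) (Φ₁ ω + Φ₂ ω) ∂P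
      = ∫⁻ p, p.1 B * L.indicator (fun _ => 1) (p.1 + p.2) ∂((P.map Φ₁).prod (P.map Φ₂)) := by
        rw [← hIndep.map_prod_eq_prod_map_map hΦ₁.aemeasurable hΦ₂.aemeasurable,
          lintegral_map hF (hΦ₁.prodMk hΦ₂)]
    _ = ∫⁻ φ, ∫⁻ x in B, κ x ((· + φ) ⁻¹' L) ∂M ∂(P.map Φ₂) := by
        rw [lintegral_prod_symm _ hF.aemeasurable]
        exact lintegral_congr hCampbell
    _ = ∫⁻ x in B, ∫⁻ φ, κ x ((· + φ) ⁻¹' L) ∂(P.map Φ₂) ∂M :=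
        (lintegral_lintegral_swap (κ.measurable_apply_preimage_add_right hL).aemeasurable).symm
    _ = ∫⁻ x in B, (κ x ∗ P.map Φ₂) L ∂M := by
        simp_rw [conv_apply_eq_lintegral _ _ hL]

end Campbell

theorem palm_of_superposition_general
    {Ω X : Type*} [MeasurableSpace Ω] [MeasurableSpace X]
    (P : Measure Ω) [IsProbabilityMeasure P]
    (Φ₁ Φ₂ : Ω → Measure X) (hΦ₁ : Measurable Φ₁) (hΦ₂ : Measurable Φ₂)
    (hIndep : ProbabilityTheory.IndepFun Φ₁ Φ₂ P)
    (M₁ M₂ : Measure X) [SigmaFinite M₁] [SigmaFinite M₂]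
    (K₁ K₂ : X → Measure (Measure X))
    (hK₁meas : Measurable K₁) (hK₂meas : Measurable K₂)
    (hK₁prob : ∀ x, IsProbabilityMeasure (K₁ x))
    (hK₂prob : ∀ x, IsProbabilityMeasure (K₂ x))
    (hK₁ : ∀ B : Set X, MeasurableSet B → ∀ L : Set (Measure X), MeasurableSet L →
      ∫⁻ ω, Φ₁ ω B * L.indicator (fun _ => (1 : ENNReal)) (Φ₁ ω) ∂P
        = ∫⁻ x in B, K₁ x L ∂M₁)
    (hK₂ : ∀ B : Set X, MeasurableSet B → ∀ L : Set (Measure X), MeasurableSet L →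
      ∫⁻ ω, Φ₂ ω B * L.indicator (fun _ => (1 : ENNReal)) (Φ₂ ω) ∂P
        = ∫⁻ x in B, K₂ x L ∂M₂) :
    ∀ B : Set X, MeasurableSet B → ∀ L : Set (Measure X), MeasurableSet L →
      ∫⁻ ω, (Φ₁ ω + Φ₂ ω) B * L.indicator (fun _ => (1 : ENNReal)) (Φ₁ ω + Φ₂ ω) ∂P
        = ∫⁻ x in B,
            M₁.rnDeriv (M₁ + M₂) x * sumLaw (K₁ x) (P.map Φ₂) L
              + M₂.rnDeriv (M₁ + M₂) x * sumLaw (P.map Φ₁) (K₂ x) L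
          ∂(M₁ + M₂) := by
  intro B hB L hL
  let κ₁ : Kernel X (Measure X) := ⟨K₁, hK₁meas⟩
  let κ₂ : Kernel X (Measure X) := ⟨K₂, hK₂meas⟩
  have : IsMarkovKernel κ₁ := ⟨hK₁prob⟩
  have : IsMarkovKernel κ₂ := ⟨hK₂prob⟩
  have hcomm (x : X) : sumLaw (P.map Φ₁) (K₂ x) = κ₂ x ∗ P.map Φ₁ :=
    (sumLaw_eq_conv _ _).trans (conv_comm _ _)
  calc ∫⁻ ω, (Φ₁ ω + Φ₂ ω) B * L.indicator (fun _ => 1) (Φ₁ ω + Φ₂ ω) ∂P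
      = ∫⁻ ω, Φ₁ ω B * L.indicator (fun _ => 1) (Φ₁ ω + Φ₂ ω) ∂P
        + ∫⁻ ω, Φ₂ ω B * L.indicator (fun _ => 1) (Φ₂ ω + Φ₁ ω) ∂P :=
        lintegral_add_apply_mul_indicator hΦ₁ hΦ₂ hB hL
    _ = ∫⁻ x in B, (κ₁ x ∗ P.map Φ₂) L ∂M₁ + ∫⁻ x in B, (κ₂ x ∗ P.map Φ₁) L ∂M₂ :=
        congr_arg₂ (· + ·)
          (CampbellIdentity.lintegral_mul_indicator_add (κ := κ₁) hΦ₁ hΦ₂ hIndep hK₁ hB hL)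
          (CampbellIdentity.lintegral_mul_indicator_add (κ := κ₂) hΦ₂ hΦ₁ hIndep.symm hK₂ hB hL)
    _ = _ := by
        rw [← setLIntegral_rnDeriv_mul (AbsolutelyContinuous.rfl.add_right M₂)
            (κ₁.measurable_conv_apply _ hL).aemeasurable hB,
          ← setLIntegral_rnDeriv_mul (AbsolutelyContinuous.rfl.add_right' M₁)
            (κ₂.measurable_conv_apply _ hL).aemeasurable hB]
        simp only [hcomm]
        exact (lintegral_add_left
          ((measurable_rnDeriv _ _).mul (κ₁.measurable_conv_apply _ hL)) _).symm

/-- Let `Φ₁, Φ₂` be independent random measures with σ-finite mean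
measures `M₁, M₂` and Palm kernels `K₁, K₂`.  Then the mixture kernel
`x ↦ (dM₁/dM)(x) • (K₁ x ⊕ law Φ₂) + (dM₂/dM)(x) • (law Φ₁ ⊕ K₂ x)`, with
`M = M₁ + M₂`, is a Palm kernel for `Φ = Φ₁ + Φ₂`: the Campbell disintegration
`E[Φ(B) 1(Φ ∈ L)] = ∫_B P^x(L) M(dx)` holds for all measurable `B` and `L`. -/
theorem palm_of_superposition
    {Ω X : Type*} [MeasurableSpace Ω] [MeasurableSpace X]
    (P : Measure Ω) [IsProbabilityMeasure P]
    (Φ₁ Φ₂ : Ω → Measure X) (hΦ₁ : Measurable Φ₁) (hΦ₂ : Measurable Φ₂)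
    (hIndep : ProbabilityTheory.IndepFun Φ₁ Φ₂ P)
    (M₁ M₂ : Measure X) [SigmaFinite M₁] [SigmaFinite M₂]
    (hM₁ : ∀ B : Set X, MeasurableSet B → M₁ B = ∫⁻ ω, Φ₁ ω B ∂P)
    (hM₂ : ∀ B : Set X, MeasurableSet B → M₂ B = ∫⁻ ω, Φ₂ ω B ∂P)
    (K₁ K₂ : X → Measure (Measure X))
    (hK₁meas : Measurable K₁) (hK₂meas : Measurable K₂)
    (hK₁prob : ∀ x, IsProbabilityMeasure (K₁ x))
    (hK₂prob : ∀ x, IsProbabilityMeasure (K₂ x))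
    (hK₁ : ∀ B : Set X, MeasurableSet B → ∀ L : Set (Measure X), MeasurableSet L →
      ∫⁻ ω, Φ₁ ω B * L.indicator (fun _ => (1 : ENNReal)) (Φ₁ ω) ∂P
        = ∫⁻ x in B, K₁ x L ∂M₁)
    (hK₂ : ∀ B : Set X, MeasurableSet B → ∀ L : Set (Measure X), MeasurableSet L →
      ∫⁻ ω, Φ₂ ω B * L.indicator (fun _ => (1 : ENNReal)) (Φ₂ ω) ∂P
        = ∫⁻ x in B, K₂ x L ∂M₂) :
    ∀ B : Set X, MeasurableSet B → ∀ L : Set (Measure X), MeasurableSet L →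
      ∫⁻ ω, (Φ₁ ω + Φ₂ ω) B * L.indicator (fun _ => (1 : ENNReal)) (Φ₁ ω + Φ₂ ω) ∂P
        = ∫⁻ x in B,
            M₁.rnDeriv (M₁ + M₂) x * sumLaw (K₁ x) (P.map Φ₂) L
              + M₂.rnDeriv (M₁ + M₂) x * sumLaw (P.map Φ₁) (K₂ x) L
          ∂(M₁ + M₂) :=
  palm_of_superposition_general P Φ₁ Φ₂ hΦ₁ hΦ₂ hIndep M₁ M₂ K₁ K₂ hK₁meas hK₂meas hK₁prob hK₂prob
    hK₁ hK₂
end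

section
/- Let Φ₁ and Φ₂ be independent random measures on a measurable space X. Then for all measurable f, g : X → [0,∞): E[(Φ₁+Φ₂)(g) · exp(−(Φ₁+Φ₂)(f))] = E[Φ₁(g) · exp(−Φ₁(f))] · E[exp(−Φ₂(f))] + E[Φ₂(g) · exp(−Φ₂(f))] · E[exp(−Φ₁(f))], with all expectations taken in [0,∞]. -/
open MeasureTheory

/-- `expNeg t = e^{-t}` for `t ∈ [0,∞]`, with `expNeg ∞ = 0`. -/
noncomputable def expNeg (t : ENNReal) : ENNReal :=
  if t = ⊤ then 0 else ENNReal.ofReal (Real.exp (-t.toReal))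

lemma measurable_expNeg : Measurable expNeg := by
  unfold expNeg
  apply Measurable.ite (measurableSet_singleton ⊤) measurable_const
  exact ENNReal.measurable_ofReal.comp
    (Real.measurable_exp.comp ENNReal.measurable_toReal.neg)

lemma expNeg_add (a b : ENNReal) : expNeg (a + b) = expNeg a * expNeg b := by
  unfold expNeg
  rcases eq_or_ne a ⊤ with ha | ha
  · simp [ha]
  rcases eq_or_ne b ⊤ with hb | hb
  · simp [hb]
  rw [if_neg ha, if_neg hb, if_neg (by simp [ha, hb]), ENNReal.toReal_add ha hb,
    neg_add, Real.exp_add, ENNReal.ofReal_mul (Real.exp_nonneg _)]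

/-- For independent random measures `Φ₁, Φ₂` on a measurable space `X`
and measurable `f g : X → [0,∞)`,
`E[(Φ₁+Φ₂)(g) e^{−(Φ₁+Φ₂)(f)}] = E[Φ₁(g) e^{−Φ₁(f)}]·E[e^{−Φ₂(f)}] + E[Φ₂(g) e^{−Φ₂(f)}]·E[e^{−Φ₁(f)}]`. -/
theorem superposition_campbell_laplace
    {Ω X : Type*} [MeasurableSpace Ω] [MeasurableSpace X]
    (P : Measure Ω) [IsProbabilityMeasure P]
    (Φ₁ Φ₂ : Ω → Measure X) (hΦ₁ : Measurable Φ₁) (hΦ₂ : Measurable Φ₂)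
    (hIndep : ProbabilityTheory.IndepFun Φ₁ Φ₂ P)
    (f g : X → ENNReal) (hf : Measurable f) (hg : Measurable g) :
    ∫⁻ ω, (∫⁻ x, g x ∂(Φ₁ ω + Φ₂ ω)) * expNeg (∫⁻ x, f x ∂(Φ₁ ω + Φ₂ ω)) ∂P
      = (∫⁻ ω, (∫⁻ x, g x ∂(Φ₁ ω)) * expNeg (∫⁻ x, f x ∂(Φ₁ ω)) ∂P)
          * (∫⁻ ω, expNeg (∫⁻ x, f x ∂(Φ₂ ω)) ∂P)
        + (∫⁻ ω, (∫⁻ x, g x ∂(Φ₂ ω)) * expNeg (∫⁻ x, f x ∂(Φ₂ ω)) ∂P)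
          * (∫⁻ ω, expNeg (∫⁻ x, f x ∂(Φ₁ ω)) ∂P) := by
  -- measurable maps on the space of measures
  set A : Measure X → ENNReal := fun μ => (∫⁻ x, g x ∂μ) * expNeg (∫⁻ x, f x ∂μ) with hA
  set L : Measure X → ENNReal := fun μ => expNeg (∫⁻ x, f x ∂μ) with hL
  have hAmeas : Measurable A :=
    (Measure.measurable_lintegral hg).mul
      (measurable_expNeg.comp (Measure.measurable_lintegral hf))
  have hLmeas : Measurable L := measurable_expNeg.comp (Measure.measurable_lintegral hf)
  have key : ∀ ω, (∫⁻ x, g x ∂(Φ₁ ω + Φ₂ ω)) * expNeg (∫⁻ x, f x ∂(Φ₁ ω + Φ₂ ω))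
      = A (Φ₁ ω) * L (Φ₂ ω) + A (Φ₂ ω) * L (Φ₁ ω) := by
    intro ω
    simp only [lintegral_add_measure, expNeg_add, hA, hL]
    ring
  calc ∫⁻ ω, (∫⁻ x, g x ∂(Φ₁ ω + Φ₂ ω)) * expNeg (∫⁻ x, f x ∂(Φ₁ ω + Φ₂ ω)) ∂P
      = ∫⁻ ω, (A (Φ₁ ω) * L (Φ₂ ω) + A (Φ₂ ω) * L (Φ₁ ω)) ∂P := by
        exact lintegral_congr key
    _ = (∫⁻ ω, A (Φ₁ ω) * L (Φ₂ ω) ∂P) + ∫⁻ ω, A (Φ₂ ω) * L (Φ₁ ω) ∂P := by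
        exact lintegral_add_left ((hAmeas.comp hΦ₁).mul (hLmeas.comp hΦ₂)) _
    _ = (∫⁻ ω, A (Φ₁ ω) ∂P) * (∫⁻ ω, L (Φ₂ ω) ∂P)
          + (∫⁻ ω, A (Φ₂ ω) ∂P) * (∫⁻ ω, L (Φ₁ ω) ∂P) := by
        have h1 := ProbabilityTheory.lintegral_mul_eq_lintegral_mul_lintegral_of_indepFun
            (hAmeas.comp hΦ₁) (hLmeas.comp hΦ₂) (hIndep.comp hAmeas hLmeas)
        have h2 := ProbabilityTheory.lintegral_mul_eq_lintegral_mul_lintegral_of_indepFun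
            (hAmeas.comp hΦ₂) (hLmeas.comp hΦ₁) (hIndep.symm.comp hAmeas hLmeas)
        simp only [Pi.mul_apply, Function.comp_apply] at h1 h2
        rw [h1, h2]
end

section
/- Let Φ₁, …, Φ_d be mutually independent random measures on a measurable space X with σ-finite mean measures M₁, …, M_d, each Φᵢ admitting a Palm kernel {Pᵢ^x}_{x∈X}. Set Φ = Σᵢ₌₁^d Φᵢ and M = Σᵢ₌₁^d Mᵢ. Then the kernel P^x := Σᵢ₌₁^d (dMᵢ/dM)(x) · (Pᵢ^x ⊕ law(Σ_{q≠i} Φ_q)) is a Palm kernel for Φ, i.e., for every measurable B ⊆ X and every measurable set L of measures on X, E[Φ(B) 1(Φ ∈ L)] = ∫_B P^x(L) M(dx). (Equivalently: the Palm version of Σᵢ Φᵢ at x equals in distribution Φᵢₓ + Σ_{q≠i} Φ_q with probability proportional to Mᵢ(dx), for i = 1, …, d.) -/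
/-!
Write `Φ = Φᵢ + Rᵢ` with `Rᵢ = Σ_{q ≠ i} Φ_q`, so that `E[Φ(B) 1_L(Φ)] = Σᵢ E[Φᵢ(B) 1_L(Φᵢ + Rᵢ)]`.
The Campbell identity for `Φᵢ` says that the law of `Φᵢ` weighted by `μ ↦ μ(B)` is the mixture
`∫_B Kᵢ x Mᵢ(dx)`, so it holds for every measurable functional of `Φᵢ`, not only indicators.
Since `Rᵢ` is independent of `Φᵢ`, integrating it out first gives the functional
`μ ↦ P(μ + Rᵢ ∈ L)`, whose `Kᵢ x`-integral is `(Kᵢ x ⊕ law Rᵢ)(L)`. Finally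
`∫_B f dMᵢ = ∫_B (dMᵢ/dM) f dM` puts all terms under the one measure `M = Σᵢ Mᵢ`.
-/

open MeasureTheory

open ProbabilityTheory
open scoped ENNReal

section

variable {X : Type*} [MeasurableSpace X]

lemma sumLaw_apply (Q₁ Q₂ : Measure (Measure X)) [SFinite Q₂] {L : Set (Measure X)}
    (hL : MeasurableSet L) :
    sumLaw Q₁ Q₂ L = ∫⁻ μ, Q₂ ((μ + ·) ⁻¹' L) ∂Q₁ := by
  rw [sumLaw, Measure.map_apply measurable_add hL, Measure.prod_apply (measurable_add hL)]
  rfl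

lemma measurable_measure_add_preimage (Q : Measure (Measure X)) [SFinite Q]
    {L : Set (Measure X)} (hL : MeasurableSet L) :
    Measurable fun μ : Measure X => Q ((μ + ·) ⁻¹' L) :=
  measurable_measure_prodMk_left (measurable_add hL)

lemma measurable_sumLaw_apply {Y : Type*} [MeasurableSpace Y] {K : Y → Measure (Measure X)}
    (hK : Measurable K) (Q : Measure (Measure X)) [SFinite Q] {L : Set (Measure X)}
    (hL : MeasurableSet L) :
    Measurable fun y => sumLaw (K y) Q L := by
  simp_rw [sumLaw_apply _ Q hL]
  exact (Measure.measurable_lintegral (measurable_measure_add_preimage Q hL)).comp hK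

lemma sum_setLIntegral_eq_setLIntegral_rnDeriv_mul {ι : Type*} [Fintype ι]
    (M : ι → Measure X) [∀ i, SigmaFinite (M i)] {f : ι → X → ℝ≥0∞}
    (hf : ∀ i, Measurable (f i)) {B : Set X} (hB : MeasurableSet B) :
    ∑ i, ∫⁻ x in B, f i x ∂M i
      = ∫⁻ x in B, ∑ i, (M i).rnDeriv (∑ q, M q) x * f i x ∂(∑ q, M q) := by
  have : SigmaFinite (∑ q, M q) := Measure.sum_fintype M ▸ inferInstance
  rw [lintegral_finsetSum _ fun i _ => (Measure.measurable_rnDeriv _ _).fun_mul (hf i)]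
  refine Finset.sum_congr rfl fun i _ => (setLIntegral_rnDeriv_mul ?_ (hf i).aemeasurable hB).symm
  exact Measure.sum_fintype M ▸ Measure.absolutelyContinuous_sum_right i .rfl

variable {Ω : Type*} [MeasurableSpace Ω]

def IsPalmKernel (P : Measure Ω) (Φ : Ω → Measure X) (M : Measure X)
    (K : X → Measure (Measure X)) : Prop :=
  ∀ B : Set X, MeasurableSet B → ∀ L : Set (Measure X), MeasurableSet L →
    ∫⁻ ω, Φ ω B * L.indicator (fun _ => (1 : ℝ≥0∞)) (Φ ω) ∂P = ∫⁻ x in B, K x L ∂M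

variable {P : Measure Ω} {Φ : Ω → Measure X} {M : Measure X} {K : X → Measure (Measure X)}
  {B : Set X}

lemma withDensity_map_eq_bind_of_palm (hΦ : Measurable Φ) (hK : Measurable K)
    (hB : MeasurableSet B) (hPalm : IsPalmKernel P Φ M K) :
    (P.map Φ).withDensity (fun μ => μ B) = (M.restrict B).bind K := by
  ext L hL
  rw [withDensity_apply _ hL, Measure.bind_apply hL hK.aemeasurable, ← hPalm B hB L hL,
    ← lintegral_indicator hL, lintegral_map ((Measure.measurable_coe hB).indicator hL) hΦ]
  refine lintegral_congr fun ω => ?_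
  by_cases h : Φ ω ∈ L <;> simp [h]

lemma lintegral_mul_comp_eq_of_palm (hΦ : Measurable Φ) (hK : Measurable K)
    (hB : MeasurableSet B) (hPalm : IsPalmKernel P Φ M K)
    {g : Measure X → ℝ≥0∞} (hg : Measurable g) :
    ∫⁻ ω, Φ ω B * g (Φ ω) ∂P = ∫⁻ x in B, ∫⁻ μ, g μ ∂K x ∂M := by
  calc ∫⁻ ω, Φ ω B * g (Φ ω) ∂P
      = ∫⁻ μ, g μ ∂(P.map Φ).withDensity (fun μ => μ B) := by
        rw [lintegral_withDensity_eq_lintegral_mul _ (Measure.measurable_coe hB) hg,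
          lintegral_map ((Measure.measurable_coe hB).mul hg) hΦ]
        rfl
    _ = ∫⁻ x in B, ∫⁻ μ, g μ ∂K x ∂M := by
        rw [withDensity_map_eq_bind_of_palm hΦ hK hB hPalm,
          Measure.lintegral_bind hK.aemeasurable hg.aemeasurable]

lemma lintegral_mul_indicator_add_of_indepFun [IsFiniteMeasure P] (hΦ : Measurable Φ)
    {R : Ω → Measure X} (hR : Measurable R) (hΦR : IndepFun Φ R P) (hK : Measurable K)
    (hB : MeasurableSet B) (hPalm : IsPalmKernel P Φ M K)
    {L : Set (Measure X)} (hL : MeasurableSet L) :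
    ∫⁻ ω, Φ ω B * L.indicator (fun _ => (1 : ℝ≥0∞)) (Φ ω + R ω) ∂P
      = ∫⁻ x in B, sumLaw (K x) (P.map R) L ∂M := by
  have hF : Measurable fun p : Measure X × Measure X =>
      p.1 B * L.indicator (fun _ => (1 : ℝ≥0∞)) (p.1 + p.2) :=
    ((Measure.measurable_coe hB).comp measurable_fst).mul
      ((measurable_const.indicator hL).comp measurable_add)
  calc ∫⁻ ω, Φ ω B * L.indicator (fun _ => (1 : ℝ≥0∞)) (Φ ω + R ω) ∂P
      = ∫⁻ p, p.1 B * L.indicator (fun _ => (1 : ℝ≥0∞)) (p.1 + p.2)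
          ∂(P.map Φ).prod (P.map R) := by
        rw [← (indepFun_iff_map_prod_eq_prod_map_map hΦ.aemeasurable hR.aemeasurable).mp hΦR,
          lintegral_map hF (hΦ.prodMk hR)]
    _ = ∫⁻ μ, μ B * P.map R ((μ + ·) ⁻¹' L) ∂P.map Φ := by
        rw [lintegral_prod _ hF.aemeasurable]
        refine lintegral_congr fun μ => ?_
        dsimp only
        rw [lintegral_const_mul (f := fun ν => L.indicator (fun _ => (1 : ℝ≥0∞)) (μ + ν)) _
            ((measurable_const.indicator hL).comp (measurable_const_add μ)),
          lintegral_indicator_const_comp (measurable_const_add μ) hL, one_mul]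
    _ = ∫⁻ x in B, sumLaw (K x) (P.map R) L ∂M := by
        rw [lintegral_map ((Measure.measurable_coe hB).fun_mul
            (measurable_measure_add_preimage _ hL)) hΦ,
          lintegral_mul_comp_eq_of_palm hΦ hK hB hPalm (measurable_measure_add_preimage _ hL)]
        simp_rw [sumLaw_apply _ _ hL]

end

theorem palm_of_superposition_multiple_general
    {Ω X : Type*} [MeasurableSpace Ω] [MeasurableSpace X]
    (P : Measure Ω) [IsProbabilityMeasure P]
    (d : ℕ) (Φ : Fin d → Ω → Measure X) (hΦ : ∀ i, Measurable (Φ i))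
    (hIndep : ProbabilityTheory.iIndepFun Φ P)
    (M : Fin d → Measure X) (hMsf : ∀ i, SigmaFinite (M i))
    (K : Fin d → X → Measure (Measure X))
    (hKmeas : ∀ i, Measurable (K i))
    (hK : ∀ i, ∀ B : Set X, MeasurableSet B → ∀ L : Set (Measure X), MeasurableSet L →
      ∫⁻ ω, Φ i ω B * L.indicator (fun _ => (1 : ENNReal)) (Φ i ω) ∂P
        = ∫⁻ x in B, K i x L ∂(M i)) :
    ∀ B : Set X, MeasurableSet B → ∀ L : Set (Measure X), MeasurableSet L →
      ∫⁻ ω, (∑ i, Φ i ω) B * L.indicator (fun _ => (1 : ENNReal)) (∑ i, Φ i ω) ∂P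
        = ∫⁻ x in B,
            ∑ i, (M i).rnDeriv (∑ q, M q) x
              * sumLaw (K i x) (P.map (fun ω => ∑ q ∈ Finset.univ.erase i, Φ q ω)) L
          ∂(∑ q, M q) := by
  intro B hB L hL
  set R : Fin d → Ω → Measure X := fun i ω => ∑ q ∈ Finset.univ.erase i, Φ q ω
  have hR (i : Fin d) : Measurable (R i) := Finset.measurable_sum _ fun q _ => hΦ q
  have hΦR (i : Fin d) : IndepFun (Φ i) (R i) P := by
    simpa [R, Finset.sum_fn] using
      (hIndep.indepFun_finsetSum_of_notMem hΦ (Finset.notMem_erase i Finset.univ)).symm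
  have hsplit (i : Fin d) (ω : Ω) : ∑ q, Φ q ω = Φ i ω + R i ω :=
    (Finset.add_sum_erase _ _ (Finset.mem_univ i)).symm
  calc ∫⁻ ω, (∑ i, Φ i ω) B * L.indicator (fun _ => (1 : ℝ≥0∞)) (∑ i, Φ i ω) ∂P
      = ∫⁻ ω, ∑ i, Φ i ω B * L.indicator (fun _ => (1 : ℝ≥0∞)) (Φ i ω + R i ω) ∂P := by
        refine lintegral_congr fun ω => ?_
        rw [Measure.finsetSum_apply, Finset.sum_mul]
        exact Finset.sum_congr rfl fun i _ => by rw [← hsplit i ω]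
    _ = ∑ i, ∫⁻ ω, Φ i ω B * L.indicator (fun _ => (1 : ℝ≥0∞)) (Φ i ω + R i ω) ∂P :=
        lintegral_finsetSum _ fun i _ => ((Measure.measurable_coe hB).comp (hΦ i)).mul
          ((measurable_const.indicator hL).comp ((hΦ i).add (hR i)))
    _ = ∑ i, ∫⁻ x in B, sumLaw (K i x) (P.map (R i)) L ∂M i :=
        Finset.sum_congr rfl fun i _ => lintegral_mul_indicator_add_of_indepFun (hΦ i) (hR i)
          (hΦR i) (hKmeas i) hB (hK i) hL
    _ = _ := sum_setLIntegral_eq_setLIntegral_rnDeriv_mul M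
        (fun i => measurable_sumLaw_apply (hKmeas i) _ hL) hB

/-- Let `Φ₁, …, Φ_d` be mutually independent random measures with
σ-finite mean measures `M₁, …, M_d` and Palm kernels `K₁, …, K_d`.  Then the kernel
`x ↦ Σᵢ (dMᵢ/dM)(x) • (Kᵢ x ⊕ law(Σ_{q≠i} Φ_q))`, with `M = Σᵢ Mᵢ`, is a Palm kernel
for `Φ = Σᵢ Φᵢ`. -/
theorem palm_of_superposition_multiple
    {Ω X : Type*} [MeasurableSpace Ω] [MeasurableSpace X]
    (P : Measure Ω) [IsProbabilityMeasure P]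
    (d : ℕ) (Φ : Fin d → Ω → Measure X) (hΦ : ∀ i, Measurable (Φ i))
    (hIndep : ProbabilityTheory.iIndepFun Φ P)
    (M : Fin d → Measure X) (hMsf : ∀ i, SigmaFinite (M i))
    (hM : ∀ i, ∀ B : Set X, MeasurableSet B → M i B = ∫⁻ ω, Φ i ω B ∂P)
    (K : Fin d → X → Measure (Measure X))
    (hKmeas : ∀ i, Measurable (K i))
    (hKprob : ∀ i x, IsProbabilityMeasure (K i x))
    (hK : ∀ i, ∀ B : Set X, MeasurableSet B → ∀ L : Set (Measure X), MeasurableSet L →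
      ∫⁻ ω, Φ i ω B * L.indicator (fun _ => (1 : ENNReal)) (Φ i ω) ∂P
        = ∫⁻ x in B, K i x L ∂(M i)) :
    ∀ B : Set X, MeasurableSet B → ∀ L : Set (Measure X), MeasurableSet L →
      ∫⁻ ω, (∑ i, Φ i ω) B * L.indicator (fun _ => (1 : ENNReal)) (∑ i, Φ i ω) ∂P
        = ∫⁻ x in B,
            ∑ i, (M i).rnDeriv (∑ q, M q) x
              * sumLaw (K i x) (P.map (fun ω => ∑ q ∈ Finset.univ.erase i, Φ q ω)) L
          ∂(∑ q, M q) :=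
  palm_of_superposition_multiple_general P d Φ hΦ hIndep M hMsf K hKmeas hK
end

section
/- Fix k ≥ 1 and points x₁, …, x_k ∈ X with 0 < η(x₁,…,x_k) < ∞. Let ζ = (θ*, γ*) be a random element of X × (0,∞) with distribution f_{x}(dθ, dγ) = γ^k ∏_{j=1}^k κ(x_j; θ) ν(dθ, dγ) / η(x₁,…,x_k), and let Ψ be a random measure on X such that for every measurable B ⊆ X, almost surely E[Ψ(B) | ζ] = γ* ∫_B κ(y; θ*) μ(dy). Then the mean measure of Ψ is M_Ψ(B) = ∫_B η(x₁,…,x_k, y) μ(dy) / η(x₁,…,x_k) for every measurable B ⊆ X. -/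
open MeasureTheory

/-- mean measure of the component process `Φ_{ζ_x}`.
Let `ζ = (θ*, γ*)` have distribution `f_x(dθ,dγ) ∝ γ^k ∏ⱼ κ(xⱼ;θ) ν(dθ,dγ)` and let
`Ψ` satisfy `E[Ψ(B) | ζ] = γ* ∫_B κ(y;θ*) μ(dy)`.  Then the mean measure of `Ψ` is
`M_Ψ(B) = ∫_B η(x₁,…,x_k,y) μ(dy) / η(x₁,…,x_k)`. -/
theorem component_process_mean_measure
    {Ω X : Type*} [MeasurableSpace Ω] [MeasurableSpace X]
    (P : Measure Ω) [IsProbabilityMeasure P]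
    (μ : Measure X) [SigmaFinite μ]
    (ν : Measure (X × NNReal)) [SigmaFinite ν]
    (κ : X → X → ENNReal) (hκ : Measurable (Function.uncurry κ))
    (hκ1 : ∀ θ : X, ∫⁻ y, κ y θ ∂μ = 1)
    (k : ℕ) (hk : 1 ≤ k) (x : Fin k → X)
    -- `0 < η(x₁,…,x_k) < ∞`
    (hη0 : (∫⁻ z, (z.2 : ENNReal) ^ k * ∏ j, κ (x j) z.1 ∂ν) ≠ 0)
    (hηtop : (∫⁻ z, (z.2 : ENNReal) ^ k * ∏ j, κ (x j) z.1 ∂ν) ≠ ⊤)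
    (ζ : Ω → X × NNReal) (hζmeas : Measurable ζ)
    -- `ζ` has the size-biased distribution `f_x`
    (hζlaw : P.map ζ
      = (∫⁻ z, (z.2 : ENNReal) ^ k * ∏ j, κ (x j) z.1 ∂ν)⁻¹
          • ν.withDensity (fun z => (z.2 : ENNReal) ^ k * ∏ j, κ (x j) z.1))
    (Ψ : Ω → Measure X) (hΨmeas : Measurable Ψ)
    -- conditionally on `ζ`, the mean of `Ψ(B)` is `γ* ∫_B κ(y;θ*) μ(dy)`
    (hcond : ∀ B : Set X, MeasurableSet B →
      ∀ G : X × NNReal → ENNReal, Measurable G →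
      ∫⁻ ω, Ψ ω B * G (ζ ω) ∂P
        = ∫⁻ ω, ((ζ ω).2 : ENNReal) * (∫⁻ y in B, κ y (ζ ω).1 ∂μ) * G (ζ ω) ∂P) :
    ∀ B : Set X, MeasurableSet B →
      ∫⁻ ω, Ψ ω B ∂P
        = (∫⁻ z, (z.2 : ENNReal) ^ k * ∏ j, κ (x j) z.1 ∂ν)⁻¹
            * ∫⁻ y in B, (∫⁻ z, (z.2 : ENNReal) ^ (k + 1)
                * κ y z.1 * ∏ j, κ (x j) z.1 ∂ν) ∂μ := by
  intro B hB
  set η := (∫⁻ z, (z.2 : ENNReal) ^ k * ∏ j, κ (x j) z.1 ∂ν)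
  have hκm : ∀ {α : Type _} [MeasurableSpace α] {f g : α → X},
      Measurable f → Measurable g → Measurable fun a => κ (f a) (g a) :=
    by intro α _ f g hf hg; exact hκ.comp (hf.prodMk hg)
  have hFmeas : Measurable fun z : X × NNReal => (z.2 : ENNReal) * ∫⁻ y in B, κ y z.1 ∂μ := by
    apply Measurable.mul (by fun_prop)
    have : Measurable fun z : X × NNReal => ∫⁻ y in B, κ y z.1 ∂μ := by
      apply Measurable.lintegral_prod_right' (f := fun p : (X × NNReal) × X => κ p.2 p.1.1)
      exact hκm (by fun_prop) (by fun_prop)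
    exact this
  have hdens : Measurable fun z : X × NNReal => (z.2 : ENNReal) ^ k * ∏ j, κ (x j) z.1 := by
    apply Measurable.mul (by fun_prop)
    exact Finset.measurable_prod _ fun j _ => hκm (by fun_prop) (by fun_prop)
  have h1 := hcond B hB (fun _ => 1) measurable_const
  simp only [mul_one] at h1
  rw [h1]
  have h2 : ∫⁻ ω, ((ζ ω).2 : ENNReal) * (∫⁻ y in B, κ y (ζ ω).1 ∂μ) ∂P
      = ∫⁻ z, (z.2 : ENNReal) * (∫⁻ y in B, κ y z.1 ∂μ) ∂(P.map ζ) := by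
    rw [lintegral_map hFmeas hζmeas]
  rw [h2, hζlaw, lintegral_smul_measure,
    lintegral_withDensity_eq_lintegral_mul _ hdens hFmeas]
  congr 1
  have h3 : ∀ z : X × NNReal,
      ((z.2 : ENNReal) ^ k * ∏ j, κ (x j) z.1) * ((z.2 : ENNReal) * ∫⁻ y in B, κ y z.1 ∂μ)
      = ∫⁻ y in B, (z.2 : ENNReal) ^ (k + 1) * κ y z.1 * ∏ j, κ (x j) z.1 ∂μ := by
    intro z
    rw [← lintegral_const_mul _ (hκm measurable_id measurable_const : Measurable fun y => κ y z.1)]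
    rw [← lintegral_const_mul]
    · congr 1; ext y; ring
    · exact Measurable.mul (by fun_prop) (hκm (by fun_prop) (by fun_prop))
  simp only [Pi.mul_apply, h3]
  rw [lintegral_lintegral_swap]
  exact (Measurable.mul (Measurable.mul (by fun_prop)
      (hκm (measurable_snd : Measurable fun p : (X × NNReal) × X => p.2)
        (measurable_fst.fst : Measurable fun p : (X × NNReal) × X => p.1.1)))
    (Finset.measurable_prod _ fun j _ =>
      hκm (measurable_const : Measurable fun _ : (X × NNReal) × X => x j)
        measurable_fst.fst)).aemeasurable
end

section
/- Fix k ≥ 1 and points x₁, …, x_k ∈ X with 0 < η(x₁,…,x_k) < ∞. Let ζ = (θ*, γ*) be a random element of X × (0,∞) with distribution f_{x}(dθ, dγ) = γ^k ∏_{j=1}^k κ(x_j; θ) ν(dθ, dγ) / η(x₁,…,x_k), and let Ψ be a random measure on X that is conditionally Poisson given ζ, in the sense that for all measurable f, g : X → [0,∞), almost surely E[Ψ(g) exp(−Ψ(f)) | ζ] = (γ* ∫_X g(y) κ(y; θ*) μ(dy)) · exp(−γ* ∫_X (1 − e^{−f(y)}) κ(y; θ*) μ(dy)). Then for all measurable f,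 g ≥ 0: E[Ψ(g) exp(−Ψ(f))] = η(x₁,…,x_k)^{−1} ∫_X g(y) e^{−f(y)}·e^{f(y)} [∫_{X×(0,∞)} exp(−γ ∫_X (1 − e^{−f(z)}) κ(z; θ) μ(dz)) γ^{k+1} κ(y; θ) ∏_{j=1}^k κ(x_j; θ) ν(dθ, dγ)] μ(dy); equivalently, with M_Ψ(dy) = η(x₁,…,x_k,y) μ(dy)/η(x₁,…,x_k), one has E[Ψ(g) e^{−Ψ(f)}] = ∫_X g(y) L_{(x,y)}(f) M_Ψ(dy), where L_{(x,y)}(f) = η(x₁,…,x_k,y)^{−1} ∫ exp(−γ ∫(1−e^{−f})κ(·;θ)dμ) γ^{k+1} ∏_{j=1}^k κ(x_j;θ) κ(y;θ) ν(dθ,dγ) is the Laplace functional of the component process with k+1 conditioning points (x₁,…,x_k,y). This expresses that the reduced Palm version of the component process Φ_{ζ_x} at y is distributed as Φ_{ζ_{(x,y)}}. -/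
open MeasureTheory

/-- Campbell–Laplace identity for the component process `Φ_{ζ_x}`;
its reduced Palm version at `y` is distributed as `Φ_{ζ_{(x,y)}}`.
Let `ζ = (θ*, γ*)` have distribution `f_x(dθ,dγ) ∝ γ^k ∏ⱼ κ(xⱼ;θ) ν(dθ,dγ)` and let
`Ψ` be conditionally Poisson given `ζ`.  Then for all measurable `f, g ≥ 0`,
`E[Ψ(g) e^{−Ψ(f)}] = η(x)⁻¹ ∫ g(y) [∫ exp(−γ∫(1−e^{−f})κ(·;θ)dμ) γ^{k+1} κ(y;θ)
∏ⱼ κ(xⱼ;θ) ν(dθ,dγ)] μ(dy)`. -/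
theorem component_process_campbell_laplace
    {Ω X : Type*} [MeasurableSpace Ω] [MeasurableSpace X]
    (P : Measure Ω) [IsProbabilityMeasure P]
    (μ : Measure X) [SigmaFinite μ]
    (ν : Measure (X × NNReal)) [SigmaFinite ν]
    (κ : X → X → ENNReal) (hκ : Measurable (Function.uncurry κ))
    (hκ1 : ∀ θ : X, ∫⁻ y, κ y θ ∂μ = 1)
    (k : ℕ) (hk : 1 ≤ k) (x : Fin k → X)
    -- `0 < η(x₁,…,x_k) < ∞`
    (hη0 : (∫⁻ z, (z.2 : ENNReal) ^ k * ∏ j, κ (x j) z.1 ∂ν) ≠ 0)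
    (hηtop : (∫⁻ z, (z.2 : ENNReal) ^ k * ∏ j, κ (x j) z.1 ∂ν) ≠ ⊤)
    (ζ : Ω → X × NNReal) (hζmeas : Measurable ζ)
    -- `ζ` has the size-biased distribution `f_x`
    (hζlaw : P.map ζ
      = (∫⁻ z, (z.2 : ENNReal) ^ k * ∏ j, κ (x j) z.1 ∂ν)⁻¹
          • ν.withDensity (fun z => (z.2 : ENNReal) ^ k * ∏ j, κ (x j) z.1))
    (Ψ : Ω → Measure X) (hΨmeas : Measurable Ψ)
    -- conditionally on `ζ`, `E[Ψ(g) e^{−Ψ(f)} | ζ]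
    --   = (γ* ∫ g κ(·;θ*) dμ) · exp(−γ* ∫ (1−e^{−f}) κ(·;θ*) dμ)`
    (hcond : ∀ f g : X → ENNReal, Measurable f → Measurable g →
      ∀ G : X × NNReal → ENNReal, Measurable G →
      ∫⁻ ω, (∫⁻ y, g y ∂(Ψ ω)) * expNeg (∫⁻ y, f y ∂(Ψ ω)) * G (ζ ω) ∂P
        = ∫⁻ ω, (((ζ ω).2 : ENNReal) * ∫⁻ y, g y * κ y (ζ ω).1 ∂μ)
            * expNeg (((ζ ω).2 : ENNReal) * ∫⁻ y, (1 - expNeg (f y)) * κ y (ζ ω).1 ∂μ)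
            * G (ζ ω) ∂P) :
    ∀ f g : X → ENNReal, Measurable f → Measurable g →
      ∫⁻ ω, (∫⁻ y, g y ∂(Ψ ω)) * expNeg (∫⁻ y, f y ∂(Ψ ω)) ∂P
        = (∫⁻ z, (z.2 : ENNReal) ^ k * ∏ j, κ (x j) z.1 ∂ν)⁻¹
            * ∫⁻ y, g y
                * (∫⁻ z, expNeg ((z.2 : ENNReal) * ∫⁻ w, (1 - expNeg (f w)) * κ w z.1 ∂μ)
                    * ((z.2 : ENNReal) ^ (k + 1) * κ y z.1 * ∏ j, κ (x j) z.1) ∂ν) ∂μ := by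
  intro f g hf hg
  -- basic measurable functions
  have hsnd : Measurable fun z : X × NNReal => (z.2 : ENNReal) :=
    measurable_snd.coe_nnreal_ennreal
  have hProd : Measurable fun z : X × NNReal => ∏ j, κ (x j) z.1 := by
    apply Finset.measurable_prod
    intro j _
    exact hκ.comp (measurable_const.prodMk measurable_fst)
  set w : X × NNReal → ENNReal := fun z => (z.2 : ENNReal) ^ k * ∏ j, κ (x j) z.1 with hw_def
  have hw : Measurable w := (hsnd.pow_const k).mul hProd
  have hI₁ : Measurable fun z : X × NNReal => ∫⁻ y, g y * κ y z.1 ∂μ :=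
    Measurable.lintegral_prod_right (ν := μ)
      (f := fun (z : X × NNReal) (y : X) => g y * κ y z.1)
      ((hg.comp measurable_snd).mul (hκ.comp (measurable_snd.prodMk measurable_fst.fst)))
  have hI₂ : Measurable fun z : X × NNReal => ∫⁻ y, (1 - expNeg (f y)) * κ y z.1 ∂μ :=
    Measurable.lintegral_prod_right (ν := μ)
      (f := fun (z : X × NNReal) (y : X) => (1 - expNeg (f y)) * κ y z.1)
      ((measurable_const.sub ((measurable_expNeg.comp hf).comp measurable_snd)).mul
        (hκ.comp (measurable_snd.prodMk measurable_fst.fst)))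
  set E : X × NNReal → ENNReal :=
    fun z => expNeg ((z.2 : ENNReal) * ∫⁻ y, (1 - expNeg (f y)) * κ y z.1 ∂μ) with hE_def
  have hE : Measurable E := measurable_expNeg.comp (hsnd.mul hI₂)
  set H : X × NNReal → ENNReal :=
    fun z => ((z.2 : ENNReal) * ∫⁻ y, g y * κ y z.1 ∂μ) * E z with hH_def
  have hH : Measurable H := (hsnd.mul hI₁).mul hE
  -- use the conditional expectation hypothesis with G = 1
  have key := hcond f g hf hg (fun _ => 1) measurable_const
  simp only [mul_one] at key
  rw [key]
  -- transfer to the law of ζ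
  have h2 : ∫⁻ ω, (((ζ ω).2 : ENNReal) * ∫⁻ y, g y * κ y (ζ ω).1 ∂μ)
      * expNeg (((ζ ω).2 : ENNReal) * ∫⁻ y, (1 - expNeg (f y)) * κ y (ζ ω).1 ∂μ) ∂P
      = ∫⁻ z, H z ∂(P.map ζ) := (lintegral_map hH hζmeas).symm
  rw [h2, hζlaw, lintegral_smul_measure, lintegral_withDensity_eq_lintegral_mul ν hw hH]
  congr 1
  -- main integral identity
  calc ∫⁻ z, (w * H) z ∂ν
      = ∫⁻ z, ∫⁻ y, g y * (E z * ((z.2 : ENNReal) ^ (k + 1) * κ y z.1 * ∏ j, κ (x j) z.1)) ∂μ ∂ν := by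
        refine lintegral_congr fun z => ?_
        have hrw : ∀ y, g y * (E z * ((z.2 : ENNReal) ^ (k + 1) * κ y z.1 * ∏ j, κ (x j) z.1))
            = g y * κ y z.1 * (E z * ((z.2 : ENNReal) ^ (k + 1) * ∏ j, κ (x j) z.1)) :=
          fun y => by ring
        simp only [hrw]
        rw [lintegral_mul_const _ (show Measurable fun y => g y * κ y z.1 from
          hg.mul (hκ.comp (measurable_id.prodMk measurable_const)))]
        simp only [Pi.mul_apply, hw_def, hH_def, hE_def]
        ring
    _ = ∫⁻ y, ∫⁻ z, g y * (E z * ((z.2 : ENNReal) ^ (k + 1) * κ y z.1 * ∏ j, κ (x j) z.1)) ∂ν ∂μ := by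
        apply lintegral_lintegral_swap
        apply Measurable.aemeasurable
        exact (hg.comp measurable_snd).mul ((hE.comp measurable_fst).mul
          ((((hsnd.comp measurable_fst).pow_const (k + 1)).mul
            (hκ.comp (measurable_snd.prodMk measurable_fst.fst))).mul (hProd.comp measurable_fst)))
    _ = ∫⁻ y, g y * ∫⁻ z, E z * ((z.2 : ENNReal) ^ (k + 1) * κ y z.1 * ∏ j, κ (x j) z.1) ∂ν ∂μ := by
        refine lintegral_congr fun y => ?_
        rw [lintegral_const_mul]
        exact hE.mul (((hsnd.pow_const (k + 1)).mul
          (hκ.comp (measurable_const.prodMk measurable_fst))).mul hProd)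
end

section
/- In the shot-noise Cox process setup, assume additionally that Φ is a simple point process and, for a fixed k ≥ 1: (a) almost surely E[Φ^{(k)}(A) | Λ] = ((T_Λ · μ)^{⊗k})(A) for every measurable A ⊆ X^k, where T_Λ · μ is the measure with density T_Λ with respect to μ (the factorial-moment property of a Poisson process, applied conditionally); and (b) the k-th moment measure of Λ satisfies E[Λ^{⊗k}(C)] = Σ_{𝒫} ((ι_𝒫)_* ν^{⊗|𝒫|})(C) for every measurable C ⊆ (X×(0,∞))^k, where ι_𝒫 maps a |𝒫|-tuple (z_J)_{J∈𝒫} to the k-tuple whose j-th coordinate is z_{J(j)}, J(j) being the block containing j (the moment-measure formula of a Poisson process with intensity ν). Then the k-th factorial moment measure of Φ is M_Φ^{(k)}(A) = ∫_A Σ_{𝒫} ∏_{J∈𝒫} η(x_J) μ^{⊗k}(dx₁ … dx_k) for every measurable A ⊆ X^k. -/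
/-!
Given `Λ`, property (a) turns the factorial moment measure into `E[(T_Λ · μ)^{⊗k}(A)]`, and by
Tonelli this is `∫_A E[∏ⱼ T_Λ(xⱼ)] μ^{⊗k}(dx)`. Since `∏ⱼ T_Λ(xⱼ)` is the integral of
`∏ⱼ γⱼ κ(xⱼ; θⱼ)` against `Λ^{⊗k}`, the moment formula (b) splits its expectation into a sum over
set partitions; on the diagonal of a block `J` all `(θⱼ, γⱼ)` coincide, which produces `η(x_J)`.

For the interchanges to be legitimate, `Λ` is replaced by an almost surely equal s-finite kernel:
the Laplace functional forces `Λ` to be almost surely finite on the sets of a σ-finite exhaustion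
of `ν`, and s-finiteness makes `T_Λ` jointly measurable and `ω ↦ Λ^{⊗k}` measurable.
-/

open MeasureTheory

/-- The set `D_k` of `k`-tuples with pairwise distinct coordinates. -/
def distinctTuples (X : Type*) (k : ℕ) : Set (Fin k → X) :=
  {t : Fin k → X | Function.Injective t}

open ProbabilityTheory Filter Set
open scoped ENNReal Topology

lemma expNeg_zero : expNeg 0 = 1 := by simp [expNeg]

lemma expNeg_top : expNeg ∞ = 0 := by simp [expNeg]

lemma expNeg_le_one (t : ℝ≥0∞) : expNeg t ≤ 1 := by
  unfold expNeg
  split_ifs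
  · exact zero_le_one
  · exact ENNReal.ofReal_le_one.2 (Real.exp_le_one_iff.2 (neg_nonpos.2 ENNReal.toReal_nonneg))

lemma tendsto_expNeg_nhds_zero : Tendsto expNeg (𝓝 0) (𝓝 1) := by
  have hreal : Tendsto (fun t : ℝ≥0∞ => ENNReal.ofReal (Real.exp (-t.toReal))) (𝓝 0) (𝓝 1) := by
    simpa using ENNReal.tendsto_ofReal
      ((Real.continuous_exp.tendsto _).comp (ENNReal.tendsto_toReal ENNReal.zero_ne_top).neg)
  refine hreal.congr' ?_
  filter_upwards [eventually_ne_nhds ENNReal.zero_ne_top] with t ht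
  simp [expNeg, ht]

section Laplace

variable {Ω Z : Type*} [MeasurableSpace Ω] [MeasurableSpace Z]

lemma ae_measure_ne_top_of_laplace (P : Measure Ω) [IsProbabilityMeasure P] (ν : Measure Z)
    {Λ : Ω → Measure Z} (hΛmeas : Measurable Λ)
    (hΛ : ∀ h : Z → ℝ≥0∞, Measurable h →
      ∫⁻ ω, expNeg (∫⁻ z, h z ∂(Λ ω)) ∂P = expNeg (∫⁻ z, (1 - expNeg (h z)) ∂ν))
    {s : Set Z} (hs : MeasurableSet s) (hνs : ν s ≠ ∞) :
    ∀ᵐ ω ∂P, Λ ω s ≠ ∞ := by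
  set G : Set Ω := {ω | Λ ω s ≠ ∞}
  have hG : MeasurableSet G :=
    (((Measure.measurable_coe hs).comp hΛmeas) (measurableSet_singleton ∞)).compl
  -- testing against `c • 1_s` gives `P G ≥ E[e^{-c Λ(s)}] = e^{-(1 - e^{-c}) ν(s)}` → 1 as c → 0
  have hbound : ∀ c : ℝ≥0∞, c ≠ 0 → expNeg ((1 - expNeg c) * ν s) ≤ P G := by
    intro c hc
    have hlaplace := hΛ (s.indicator fun _ => c) (measurable_const.indicator hs)
    have hrhs : (fun z => 1 - expNeg (s.indicator (fun _ => c) z))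
        = s.indicator fun _ => 1 - expNeg c := by
      funext z
      by_cases hz : z ∈ s <;> simp [hz, expNeg_zero]
    rw [hrhs, lintegral_indicator_const hs] at hlaplace
    rw [← hlaplace, ← lintegral_indicator_one hG]
    refine lintegral_mono fun ω => ?_
    by_cases hω : ω ∈ G
    · simpa [hω] using expNeg_le_one _
    · have hinf : Λ ω s = ∞ := not_not.1 hω
      simp [hω, lintegral_indicator_const hs, hinf, hc, expNeg_top]
  have hlim : Tendsto (fun n : ℕ => expNeg ((1 - expNeg (n : ℝ≥0∞)⁻¹) * ν s)) atTop (𝓝 1) := by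
    have hsmall : Tendsto (fun n : ℕ => 1 - expNeg (n : ℝ≥0∞)⁻¹) atTop (𝓝 0) := by
      simpa using ENNReal.Tendsto.sub tendsto_const_nhds
        (tendsto_expNeg_nhds_zero.comp ENNReal.tendsto_inv_nat_nhds_zero) (Or.inl ENNReal.one_ne_top)
    have hprod := ENNReal.Tendsto.mul_const hsmall (Or.inr hνs)
    rw [zero_mul] at hprod
    exact tendsto_expNeg_nhds_zero.comp hprod
  have hPG : P G = 1 := le_antisymm prob_le_one <|
    le_of_tendsto' hlim fun n => hbound _ (ENNReal.inv_ne_zero.2 (ENNReal.natCast_ne_top n))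
  exact ae_iff.2 <| by simpa [G, compl_ofPred] using (prob_compl_eq_zero_iff hG).2 hPG

end Laplace

section PiLIntegral

variable {ι : Type*} [Fintype ι] {E : Type*} [MeasurableSpace E]

theorem lintegral_fin_nat_prod_eq_prod {n : ℕ} {μ : Fin n → Measure E} [∀ i, SigmaFinite (μ i)]
    {f : Fin n → E → ℝ≥0∞} (hf : ∀ i, Measurable (f i)) :
    ∫⁻ x, ∏ i, f i (x i) ∂(Measure.pi μ) = ∏ i, ∫⁻ x, f i x ∂(μ i) := by
  induction n with
  | zero => simp
  | succ n ih =>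
    calc
      _ = ∫⁻ x : E × (Fin n → E),
            f 0 x.1 * ∏ i : Fin n, f (Fin.succ i) (x.2 i)
            ∂((μ 0).prod (Measure.pi (fun i ↦ μ i.succ))) := by
        rw [← ((measurePreserving_piFinSuccAbove μ 0).symm).lintegral_comp_emb
          (MeasurableEquiv.measurableEmbedding _)]
        simp_rw [MeasurableEquiv.piFinSuccAbove_symm_apply, Fin.insertNthEquiv,
          Fin.prod_univ_succ, Fin.insertNth_zero, Equiv.coe_fn_mk, Fin.cons_succ,
          Fin.zero_succAbove, cast_eq, Fin.cons_zero]
      _ = (∫⁻ x, f 0 x ∂μ 0) * ∏ i : Fin n, ∫⁻ x, f (Fin.succ i) x ∂(μ i.succ) := by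
        rw [← ih fun i => hf i.succ, ← lintegral_prod_mul (hf 0).aemeasurable
          (Finset.measurable_prod _ fun i _ => (hf i.succ).comp (measurable_pi_apply i)).aemeasurable]
      _ = ∏ i, ∫⁻ x, f i x ∂(μ i) := by rw [Fin.prod_univ_succ]

theorem lintegral_fintype_prod_eq_prod {μ : ι → Measure E} [∀ i, SigmaFinite (μ i)]
    {f : ι → E → ℝ≥0∞} (hf : ∀ i, Measurable (f i)) :
    ∫⁻ x, ∏ i, f i (x i) ∂(Measure.pi μ) = ∏ i, ∫⁻ x, f i x ∂(μ i) := by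
  let e := (Fintype.equivFin ι).symm
  rw [← (measurePreserving_piCongrLeft _ e).lintegral_comp_emb
    (MeasurableEquiv.measurableEmbedding _)]
  simp_rw [← e.prod_comp, MeasurableEquiv.coe_piCongrLeft, Equiv.piCongrLeft_apply_apply]
  exact lintegral_fin_nat_prod_eq_prod fun i => hf (e i)

theorem Measure.pi_withDensity {μ : ι → Measure E} [∀ i, SigmaFinite (μ i)]
    {f : ι → E → ℝ≥0∞} (hf : ∀ i, Measurable (f i)) (hf_ne_top : ∀ i, ∀ᵐ x ∂μ i, f i x ≠ ∞) :
    Measure.pi (fun i => (μ i).withDensity (f i))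
      = (Measure.pi μ).withDensity fun x => ∏ i, f i (x i) := by
  have (i : ι) : SigmaFinite ((μ i).withDensity (f i)) :=
    SigmaFinite.withDensity_of_ne_top (hf_ne_top i)
  refine Measure.pi_eq (μ := fun i => (μ i).withDensity (f i)) fun s hs => ?_
  rw [withDensity_apply _ (MeasurableSet.univ_pi hs), Measure.restrict_pi_pi,
    lintegral_fintype_prod_eq_prod hf]
  exact Finset.prod_congr rfl fun i _ => (withDensity_apply _ (hs i)).symm

end PiLIntegral

namespace ProbabilityTheory.Kernel

variable {Ω Z : Type*} [MeasurableSpace Ω] [MeasurableSpace Z]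

lemma isSFiniteKernel_of_measure_univ_ne_top (κ : Kernel Ω Z) (h : ∀ ω, κ ω univ ≠ ∞) :
    IsSFiniteKernel κ := by
  classical
  -- `κ` is the sum of its restrictions to the level sets of `ω ↦ ⌊κ ω univ⌋₊`,
  -- and on the `m`-th one it is bounded by `m + 1`.
  set N : Ω → ℕ := fun ω => ⌊(κ ω univ).toReal⌋₊
  have hN : Measurable N := (κ.measurable_coe MeasurableSet.univ).ennreal_toReal.nat_floor
  have hlevel (m : ℕ) : MeasurableSet (N ⁻¹' {m}) := hN (measurableSet_singleton m)
  have (m : ℕ) : IsFiniteKernel (piecewise (hlevel m) κ 0) := by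
    refine ⟨⟨m + 1, by simp [ENNReal.add_lt_top], fun ω => ?_⟩⟩
    rw [piecewise_apply]
    split_ifs with hω
    · rw [← ENNReal.ofReal_toReal (h ω), ← hω]
      exact (ENNReal.ofReal_le_ofReal (Nat.lt_floor_add_one _).le).trans_eq
        (by simp [N, ENNReal.ofReal_add])
    · simp
  have hsum : κ = Kernel.sum fun m => piecewise (hlevel m) κ 0 := by
    ext ω s hs
    rw [sum_apply' _ _ hs, tsum_eq_single (N ω)]
    · simp [piecewise_apply]
    · intro m hm
      simp [piecewise_apply, Ne.symm hm]
  rw [hsum]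
  infer_instance

lemma isSFiniteKernel_of_iUnion_eq_univ (κ : Kernel Ω Z) {S : ℕ → Set Z}
    (hS : ∀ n, MeasurableSet (S n)) (hcov : ⋃ n, S n = univ) (hfin : ∀ ω n, κ ω (S n) ≠ ∞) :
    IsSFiniteKernel κ := by
  have hD := MeasurableSet.disjointed hS
  have hsum : κ = Kernel.sum fun n => κ.restrict (hD n) := by
    ext ω : 1
    simp_rw [sum_apply, restrict_apply]
    rw [← Measure.restrict_iUnion (disjoint_disjointed S) hD, iUnion_disjointed, hcov,
      Measure.restrict_univ]
  have (n : ℕ) : IsSFiniteKernel (κ.restrict (hD n)) :=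
    isSFiniteKernel_of_measure_univ_ne_top _ fun ω => by
      rw [restrict_apply, Measure.restrict_apply_univ]
      exact ne_top_of_le_ne_top (hfin ω n) (measure_mono (disjointed_subset S n))
  rw [hsum]
  infer_instance

lemma exists_ae_eq_of_iUnion_eq_univ {P : Measure Ω} {Λ : Ω → Measure Z} (hΛ : Measurable Λ)
    {S : ℕ → Set Z} (hS : ∀ n, MeasurableSet (S n)) (hcov : ⋃ n, S n = univ)
    (hfin : ∀ n, ∀ᵐ ω ∂P, Λ ω (S n) ≠ ∞) :
    ∃ K : Kernel Ω Z, IsSFiniteKernel K ∧ (∀ ω, SigmaFinite (K ω)) ∧ ∀ᵐ ω ∂P, K ω = Λ ω := by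
  classical
  set G : Set Ω := {ω | ∀ n, Λ ω (S n) ≠ ∞}
  have hG : MeasurableSet G := by
    simp only [G, ofPred_forall]
    exact MeasurableSet.iInter fun n =>
      (((Measure.measurable_coe (hS n)).comp hΛ) (measurableSet_singleton ∞)).compl
  let K : Kernel Ω Z := ⟨G.piecewise Λ 0, hΛ.piecewise hG measurable_const⟩
  have hKfin (ω : Ω) (n : ℕ) : K ω (S n) ≠ ∞ := by
    by_cases hω : ω ∈ G
    · simpa [K, hω] using hω n
    · simp [K, hω]
  refine ⟨K, isSFiniteKernel_of_iUnion_eq_univ K hS hcov hKfin, fun ω => ?_, ?_⟩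
  · exact (⟨S, fun _ => trivial, fun n => (hKfin ω n).lt_top, hcov⟩ :
      (K ω).FiniteSpanningSetsIn univ).sigmaFinite
  · filter_upwards [ae_all_iff.2 hfin] with ω hω using piecewise_eq_of_mem G Λ 0 hω

noncomputable def piFin (κ : Kernel Ω Z) : (n : ℕ) → Kernel Ω (Fin n → Z)
  | 0 => const Ω (Measure.dirac isEmptyElim)
  | n + 1 => (κ ×ₖ piFin κ n).map (MeasurableEquiv.piFinSuccAbove (fun _ => Z) 0).symm

instance isSFiniteKernel_piFin (κ : Kernel Ω Z) [IsSFiniteKernel κ] :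
    ∀ n, IsSFiniteKernel (piFin κ n)
  | 0 => by rw [piFin]; infer_instance
  | n + 1 => by
    have := isSFiniteKernel_piFin κ n
    rw [piFin]
    infer_instance

lemma piFin_apply (κ : Kernel Ω Z) [IsSFiniteKernel κ] [∀ ω, SigmaFinite (κ ω)] :
    ∀ n ω, piFin κ n ω = Measure.pi fun _ : Fin n => κ ω
  | 0, ω => by rw [piFin, const_apply, Measure.pi_of_empty]
  | n + 1, ω => by
    rw [piFin, map_apply _ (MeasurableEquiv.measurable _), prod_apply, piFin_apply κ n ω]
    exact (measurePreserving_piFinSuccAbove (fun _ => κ ω) 0).symm.map_eq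

lemma measurable_measure_pi (κ : Kernel Ω Z) [IsSFiniteKernel κ] [∀ ω, SigmaFinite (κ ω)]
    (n : ℕ) : Measurable fun ω => Measure.pi fun _ : Fin n => κ ω := by
  have h : (fun ω => Measure.pi fun _ : Fin n => κ ω) = piFin κ n :=
    funext fun ω => (piFin_apply κ n ω).symm
  exact h ▸ (piFin κ n).measurable

end ProbabilityTheory.Kernel

section PoissonMoments

variable {ι : Type*} [Fintype ι] [DecidableEq ι] {E : Type*} [MeasurableSpace E]

namespace Finpartition

def blockOf (Q : Finpartition (Finset.univ : Finset ι)) (i : ι) : {J // J ∈ Q.parts} :=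
  ⟨Q.part i, Q.part_mem.mpr (Finset.mem_univ i)⟩

lemma blockOf_eq_of_mem (Q : Finpartition (Finset.univ : Finset ι)) {J : {J // J ∈ Q.parts}}
    {i : ι} (hi : i ∈ J.1) : Q.blockOf i = J :=
  Subtype.ext (Q.part_eq_of_mem J.2 hi)

lemma prod_blockOf {M : Type*} [CommMonoid M] (Q : Finpartition (Finset.univ : Finset ι))
    (f : ι → {J // J ∈ Q.parts} → M) :
    ∏ i, f i (Q.blockOf i) = ∏ J : {J // J ∈ Q.parts}, ∏ i ∈ J.1, f i J := by
  rw [← Finset.prod_fiberwise Finset.univ Q.blockOf fun i => f i (Q.blockOf i)]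
  refine Finset.prod_congr rfl fun J _ => Finset.prod_congr ?_ fun i hi => ?_
  · ext i
    simpa using ⟨fun h => h ▸ Q.mem_part (Finset.mem_univ i), Q.blockOf_eq_of_mem⟩
  · rw [Q.blockOf_eq_of_mem hi]

end Finpartition

noncomputable def poissonMomentMeasure (ν : Measure E) (ι : Type*) [Fintype ι] [DecidableEq ι] :
    Measure (ι → E) :=
  ∑ Q : Finpartition (Finset.univ : Finset ι),
    (Measure.pi fun _ : {J // J ∈ Q.parts} => ν).map fun z i => z (Q.blockOf i)

lemma lintegral_prod_poissonMomentMeasure (ν : Measure E) [SigmaFinite ν] {f : ι → E → ℝ≥0∞}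
    (hf : ∀ i, Measurable (f i)) :
    ∫⁻ x, ∏ i, f i (x i) ∂(poissonMomentMeasure ν ι)
      = ∑ Q : Finpartition (Finset.univ : Finset ι), ∏ J ∈ Q.parts, ∫⁻ z, ∏ i ∈ J, f i z ∂ν := by
  rw [poissonMomentMeasure, lintegral_finsetSum_measure]
  refine Finset.sum_congr rfl fun Q _ => ?_
  rw [lintegral_map (by fun_prop) (by fun_prop)]
  refine (lintegral_congr fun (z : {J // J ∈ Q.parts} → E) =>
    Q.prod_blockOf fun i J => f i (z J)).trans ?_
  rw [lintegral_fintype_prod_eq_prod fun J => Finset.measurable_prod _ fun i _ => hf i]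
  exact Finset.prod_coe_sort Q.parts fun J => ∫⁻ z, ∏ i ∈ J, f i z ∂ν

variable {Ω : Type*} [MeasurableSpace Ω]

theorem lintegral_prod_lintegral_eq_sum_finpartition {P : Measure Ω} {ν : Measure E}
    [SigmaFinite ν] {M : Ω → Measure E} [∀ ω, SigmaFinite (M ω)]
    (hM : Measurable fun ω => Measure.pi fun _ : ι => M ω)
    (hmoment : ∀ C, MeasurableSet C →
      ∫⁻ ω, Measure.pi (fun _ : ι => M ω) C ∂P = poissonMomentMeasure ν ι C)
    {f : ι → E → ℝ≥0∞} (hf : ∀ i, Measurable (f i)) :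
    ∫⁻ ω, ∏ i, ∫⁻ z, f i z ∂(M ω) ∂P
      = ∑ Q : Finpartition (Finset.univ : Finset ι), ∏ J ∈ Q.parts, ∫⁻ z, ∏ i ∈ J, f i z ∂ν := by
  have hbind : P.bind (fun ω => Measure.pi fun _ : ι => M ω) = poissonMomentMeasure ν ι :=
    Measure.ext fun C hC => by rw [Measure.bind_apply hC hM.aemeasurable, hmoment C hC]
  calc ∫⁻ ω, ∏ i, ∫⁻ z, f i z ∂(M ω) ∂P
      = ∫⁻ ω, ∫⁻ x, ∏ i, f i (x i) ∂(Measure.pi fun _ : ι => M ω) ∂P := by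
        simp_rw [lintegral_fintype_prod_eq_prod hf]
    _ = ∫⁻ x, ∏ i, f i (x i) ∂(P.bind fun ω => Measure.pi fun _ : ι => M ω) :=
        (Measure.lintegral_bind hM.aemeasurable (Finset.measurable_prod _ fun i _ =>
          (hf i).comp (measurable_pi_apply i)).aemeasurable).symm
    _ = _ := by rw [hbind, lintegral_prod_poissonMomentMeasure ν hf]

end PoissonMoments

theorem sncp_factorial_moment_measure_general
    {Ω X : Type*} [MeasurableSpace Ω] [MeasurableSpace X]
    (P : Measure Ω) [IsProbabilityMeasure P]
    (μ : Measure X) [SigmaFinite μ]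
    (ν : Measure (X × NNReal)) [SigmaFinite ν]
    (κ : X → X → ENNReal) (hκ : Measurable (Function.uncurry κ))
    (Λ : Ω → Measure (X × NNReal)) (hΛmeas : Measurable Λ)
    -- Poisson Laplace functional of the directing process `Λ`
    (hΛ : ∀ h : X × NNReal → ENNReal, Measurable h →
      ∫⁻ ω, expNeg (∫⁻ z, h z ∂(Λ ω)) ∂P = expNeg (∫⁻ z, (1 - expNeg (h z)) ∂ν))
    (hTfin : ∀ᵐ ω ∂P, ∀ᵐ y ∂μ, (∫⁻ z, (z.2 : ENNReal) * κ y z.1 ∂(Λ ω)) ≠ ⊤)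
    (Φ : Ω → Measure X)
    (k : ℕ)
    -- (a) conditional factorial-moment property of the Poisson process `Φ` given `Λ`
    (ha : ∀ A : Set (Fin k → X), MeasurableSet A →
      ∀ G : Measure (X × NNReal) → ENNReal, Measurable G →
      ∫⁻ ω, ((Measure.pi fun _ : Fin k => Φ ω).restrict (distinctTuples X k)) A
          * G (Λ ω) ∂P
        = ∫⁻ ω, (Measure.pi fun _ : Fin k =>
              μ.withDensity (fun y => ∫⁻ z, (z.2 : ENNReal) * κ y z.1 ∂(Λ ω))) A
            * G (Λ ω) ∂P)
    -- (b) moment-measure formula of the Poisson process `Λ` with intensity `ν`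
    (hb : ∀ C : Set (Fin k → X × NNReal), MeasurableSet C →
      ∫⁻ ω, (Measure.pi fun _ : Fin k => Λ ω) C ∂P
        = ∑ pt : Finpartition (Finset.univ : Finset (Fin k)),
            (Measure.map
              (fun (z : {J // J ∈ pt.parts} → X × NNReal) (j : Fin k) =>
                z ⟨pt.part j, pt.part_mem.mpr (Finset.mem_univ j)⟩)
              (Measure.pi fun _ : {J // J ∈ pt.parts} => ν)) C) :
    ∀ A : Set (Fin k → X), MeasurableSet A →
      ∫⁻ ω, ((Measure.pi fun _ : Fin k => Φ ω).restrict (distinctTuples X k)) A ∂P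
        = ∫⁻ t in A,
            ∑ pt : Finpartition (Finset.univ : Finset (Fin k)),
              ∏ J ∈ pt.parts,
                ∫⁻ z, (z.2 : ENNReal) ^ J.card * ∏ j ∈ J, κ (t j) z.1 ∂ν
          ∂(Measure.pi fun _ : Fin k => μ) := by
  intro A hA
  obtain ⟨K, hK, hKσ, hKΛ⟩ := Kernel.exists_ae_eq_of_iUnion_eq_univ hΛmeas
    (measurableSet_spanningSets ν) (iUnion_spanningSets ν) fun n =>
      ae_measure_ne_top_of_laplace P ν hΛmeas hΛ (measurableSet_spanningSets ν n)
        (measure_spanningSets_lt_top ν n).ne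
  set T : Ω → X → ℝ≥0∞ := fun ω y => ∫⁻ z, (z.2 : ℝ≥0∞) * κ y z.1 ∂(K ω)
  have hT : Measurable (Function.uncurry T) :=
    Measurable.lintegral_kernel_prod_right' (κ := K.comap Prod.fst measurable_fst)
      (f := fun q : (Ω × X) × (X × NNReal) => (q.2.2 : ℝ≥0∞) * κ q.1.2 q.2.1)
      (by fun_prop)
  have hmoment (t : Fin k → X) : ∫⁻ ω, ∏ j, T ω (t j) ∂P
      = ∑ pt : Finpartition (Finset.univ : Finset (Fin k)),
          ∏ J ∈ pt.parts, ∫⁻ z, (z.2 : ℝ≥0∞) ^ J.card * ∏ j ∈ J, κ (t j) z.1 ∂ν := by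
    rw [lintegral_prod_lintegral_eq_sum_finpartition (ν := ν) (K.measurable_measure_pi k)
      (fun C hC => ?_) fun j => by fun_prop]
    · simp_rw [Finset.prod_mul_distrib, Finset.prod_const]
    · rw [poissonMomentMeasure, Measure.finsetSum_apply]
      exact (lintegral_congr_ae (hKΛ.mono fun ω hω => by rw [hω])).trans (hb C hC)
  have hpi : ∀ᵐ ω ∂P, (Measure.pi fun _ : Fin k =>
        μ.withDensity fun y => ∫⁻ z, (z.2 : ℝ≥0∞) * κ y z.1 ∂(Λ ω)) A
      = ∫⁻ t in A, ∏ j, T ω (t j) ∂(Measure.pi fun _ : Fin k => μ) := by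
    filter_upwards [hKΛ, hTfin] with ω hω hfin
    rw [← hω] at hfin ⊢
    rw [Measure.pi_withDensity (f := fun _ => T ω) (fun _ => hT.comp measurable_prodMk_left)
      fun _ => hfin,
      withDensity_apply _ hA]
  calc _ = ∫⁻ ω, (Measure.pi fun _ : Fin k =>
          μ.withDensity fun y => ∫⁻ z, (z.2 : ℝ≥0∞) * κ y z.1 ∂(Λ ω)) A ∂P := by
        simpa using ha A hA 1 measurable_const
    _ = ∫⁻ ω, ∫⁻ t in A, ∏ j, T ω (t j) ∂(Measure.pi fun _ : Fin k => μ) ∂P :=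
        lintegral_congr_ae hpi
    _ = ∫⁻ t in A, ∫⁻ ω, ∏ j, T ω (t j) ∂P ∂(Measure.pi fun _ : Fin k => μ) :=
        lintegral_lintegral_swap (by fun_prop)
    _ = _ := lintegral_congr fun t => hmoment t

/-- `k`-th factorial moment measure of a shot-noise Cox process.
Under the conditional factorial-moment property (a) and the Poisson moment-measure
formula (b) for the directing process `Λ`, the `k`-th factorial moment measure of the
shot-noise Cox process `Φ` is
`M_Φ^{(k)}(A) = ∫_A Σ_pt ∏_{J∈pt} η(x_J) μ^{⊗k}(dx)`,
the sum ranging over all set partitions `pt` of `{1,…,k}`. -/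
theorem sncp_factorial_moment_measure
    {Ω X : Type*} [MeasurableSpace Ω] [MeasurableSpace X]
    (P : Measure Ω) [IsProbabilityMeasure P]
    (μ : Measure X) [SigmaFinite μ]
    (ν : Measure (X × NNReal)) [SigmaFinite ν] (hν0 : ν {z | z.2 = 0} = 0)
    (κ : X → X → ENNReal) (hκ : Measurable (Function.uncurry κ))
    (hκ1 : ∀ θ : X, ∫⁻ y, κ y θ ∂μ = 1)
    (Λ : Ω → Measure (X × NNReal)) (hΛmeas : Measurable Λ)
    -- Poisson Laplace functional of the directing process `Λ`
    (hΛ : ∀ h : X × NNReal → ENNReal, Measurable h →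
      ∫⁻ ω, expNeg (∫⁻ z, h z ∂(Λ ω)) ∂P = expNeg (∫⁻ z, (1 - expNeg (h z)) ∂ν))
    (hTfin : ∀ᵐ ω ∂P, ∀ᵐ y ∂μ, (∫⁻ z, (z.2 : ENNReal) * κ y z.1 ∂(Λ ω)) ≠ ⊤)
    (Φ : Ω → Measure X) (hΦmeas : Measurable Φ)
    -- `Φ` is conditionally Poisson given `Λ`, with intensity `T_Λ · μ`
    (hcond : ∀ f : X → ENNReal, Measurable f →
      ∀ G : Measure (X × NNReal) → ENNReal, Measurable G →
      ∫⁻ ω, expNeg (∫⁻ y, f y ∂(Φ ω)) * G (Λ ω) ∂P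
        = ∫⁻ ω, expNeg (∫⁻ y, (1 - expNeg (f y))
            * (∫⁻ z, (z.2 : ENNReal) * κ y z.1 ∂(Λ ω)) ∂μ) * G (Λ ω) ∂P)
    -- `Φ` is a simple point process
    (hpp : ∀ᵐ ω ∂P, ∀ B : Set X, MeasurableSet B → Φ ω B = ⊤ ∨ ∃ n : ℕ, Φ ω B = n)
    (hsimple : ∀ᵐ ω ∂P, ∀ y : X, Φ ω {y} ≤ 1)
    (k : ℕ) (hk : 1 ≤ k)
    -- (a) conditional factorial-moment property of the Poisson process `Φ` given `Λ`
    (ha : ∀ A : Set (Fin k → X), MeasurableSet A →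
      ∀ G : Measure (X × NNReal) → ENNReal, Measurable G →
      ∫⁻ ω, ((Measure.pi fun _ : Fin k => Φ ω).restrict (distinctTuples X k)) A
          * G (Λ ω) ∂P
        = ∫⁻ ω, (Measure.pi fun _ : Fin k =>
              μ.withDensity (fun y => ∫⁻ z, (z.2 : ENNReal) * κ y z.1 ∂(Λ ω))) A
            * G (Λ ω) ∂P)
    -- (b) moment-measure formula of the Poisson process `Λ` with intensity `ν`
    (hb : ∀ C : Set (Fin k → X × NNReal), MeasurableSet C →
      ∫⁻ ω, (Measure.pi fun _ : Fin k => Λ ω) C ∂P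
        = ∑ pt : Finpartition (Finset.univ : Finset (Fin k)),
            (Measure.map
              (fun (z : {J // J ∈ pt.parts} → X × NNReal) (j : Fin k) =>
                z ⟨pt.part j, pt.part_mem.mpr (Finset.mem_univ j)⟩)
              (Measure.pi fun _ : {J // J ∈ pt.parts} => ν)) C) :
    ∀ A : Set (Fin k → X), MeasurableSet A →
      ∫⁻ ω, ((Measure.pi fun _ : Fin k => Φ ω).restrict (distinctTuples X k)) A ∂P
        = ∫⁻ t in A,
            ∑ pt : Finpartition (Finset.univ : Finset (Fin k)),
              ∏ J ∈ pt.parts,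
                ∫⁻ z, (z.2 : ENNReal) ^ J.card * ∏ j ∈ J, κ (t j) z.1 ∂ν
          ∂(Measure.pi fun _ : Fin k => μ) :=
  sncp_factorial_moment_measure_general P μ ν κ hκ Λ hΛmeas hΛ hTfin Φ k ha hb
end

section
/- In the shot-noise Cox process setup with factorized intensity ν(dθ, dγ) = G₀(dθ) ρ(dγ), where G₀ is a probability measure on X and ρ is a measure on (0,∞) with ∫_{(0,∞)} (1 − e^{−γ}) ρ(dγ) < ∞, fix k ≥ 0 and assume: (a) almost surely P(Φ(X) = k | Λ) = e^{−Λ(γ̂)} Λ(γ̂)^k / k!, where γ̂(θ, γ) = γ (the conditional number of points is Poisson with mean Λ(γ̂) = ∫ γ Λ(dθ, dγ)); and (b) Λ satisfies the Poisson exponential-moment formula with intensity ν. Then P(Φ(X) = k) = (1/k!) · exp(−∫_{(0,∞)} (1 − e^{−γ}) ρ(dγ)) · Σ_{𝒫} ∏_{J∈𝒫} ∫_{(0,∞)} e^{−γ} γ^{|J|} ρ(dγ), where the sum ranges over all set partitions 𝒫 of {1, …, k} (for k = 0 the sum is interpreted as 1). -/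
open MeasureTheory

/-- A random measure `Λ` satisfies the Poisson exponential-moment formula with
intensity `ν`. -/
def PoissonExpMoment {Ω Y : Type*} [MeasurableSpace Ω] [MeasurableSpace Y]
    (P : Measure Ω) (Λ : Ω → Measure Y) (ν : Measure Y) : Prop :=
  ∀ (m : ℕ), 1 ≤ m → ∀ h : Y → ENNReal, Measurable h →
    ∀ c : Fin m → Y → ENNReal, (∀ j, Measurable (c j)) →
    ∫⁻ ω, expNeg (∫⁻ z, h z ∂(Λ ω)) * ∏ j, ∫⁻ z, c j z ∂(Λ ω) ∂P
      = expNeg (∫⁻ z, (1 - expNeg (h z)) ∂ν)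
        * ∑ pt : Finpartition (Finset.univ : Finset (Fin m)),
            ∏ J ∈ pt.parts, ∫⁻ z, expNeg (h z) * ∏ j ∈ J, c j z ∂ν

/-- distribution of the number of points of a shot-noise Cox
process with factorized intensity `ν = G₀ ⊗ ρ`.
`P(Φ(X)=k) = (1/k!)·e^{−∫(1−e^{−γ})ρ(dγ)}·Σ_𝒫 ∏_{J∈𝒫} ∫ e^{−γ} γ^{|J|} ρ(dγ)`. -/
theorem sncp_number_of_points_distribution
    {Ω X : Type*} [MeasurableSpace Ω] [MeasurableSpace X]
    (P : Measure Ω) [IsProbabilityMeasure P]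
    (μ : Measure X) [SigmaFinite μ]
    (G₀ : Measure X) [IsProbabilityMeasure G₀]
    (ρm : Measure NNReal) [SigmaFinite ρm] (hρ0 : ρm {0} = 0)
    (hρint : (∫⁻ γ : NNReal, (1 - expNeg (γ : ENNReal)) ∂ρm) ≠ ⊤)
    (κ : X → X → ENNReal) (hκ : Measurable (Function.uncurry κ))
    (hκ1 : ∀ θ : X, ∫⁻ y, κ y θ ∂μ = 1)
    (Λ : Ω → Measure (X × NNReal)) (hΛmeas : Measurable Λ)
    -- Poisson Laplace functional of `Λ`, with intensity `ν = G₀ ⊗ ρ`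
    (hΛ : ∀ h : X × NNReal → ENNReal, Measurable h →
      ∫⁻ ω, expNeg (∫⁻ z, h z ∂(Λ ω)) ∂P
        = expNeg (∫⁻ z, (1 - expNeg (h z)) ∂(G₀.prod ρm)))
    (Φ : Ω → Measure X) (hΦmeas : Measurable Φ)
    -- `Φ` is conditionally Poisson given `Λ`
    (hcond : ∀ f : X → ENNReal, Measurable f →
      ∀ G : Measure (X × NNReal) → ENNReal, Measurable G →
      ∫⁻ ω, expNeg (∫⁻ y, f y ∂(Φ ω)) * G (Λ ω) ∂P
        = ∫⁻ ω, expNeg (∫⁻ y, (1 - expNeg (f y))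
            * (∫⁻ z, (z.2 : ENNReal) * κ y z.1 ∂(Λ ω)) ∂μ) * G (Λ ω) ∂P)
    (k : ℕ)
    -- (a) conditionally on `Λ`, the number of points is Poisson with mean `Λ(γ̂)`
    (ha : ∀ G : Measure (X × NNReal) → ENNReal, Measurable G →
      ∫⁻ ω, (if Φ ω Set.univ = (k : ENNReal) then 1 else 0) * G (Λ ω) ∂P
        = ∫⁻ ω, expNeg (∫⁻ z, (z.2 : ENNReal) ∂(Λ ω))
            * (∫⁻ z, (z.2 : ENNReal) ∂(Λ ω)) ^ k / (Nat.factorial k : ENNReal)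
            * G (Λ ω) ∂P)
    -- (b) Poisson exponential-moment formula for `Λ` with intensity `ν = G₀ ⊗ ρ`
    (hb : PoissonExpMoment P Λ (G₀.prod ρm)) :
    P {ω | Φ ω Set.univ = (k : ENNReal)}
      = (Nat.factorial k : ENNReal)⁻¹
          * expNeg (∫⁻ γ : NNReal, (1 - expNeg (γ : ENNReal)) ∂ρm)
          * ∑ pt : Finpartition (Finset.univ : Finset (Fin k)),
              ∏ J ∈ pt.parts,
                ∫⁻ γ : NNReal, expNeg (γ : ENNReal) * (γ : ENNReal) ^ J.card ∂ρm := by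
  classical
  have hexpNegMeas : Measurable expNeg :=
    Measurable.ite (measurableSet_singleton _) measurable_const
      (ENNReal.measurable_ofReal.comp (Real.measurable_exp.comp ENNReal.measurable_toReal.neg))
  have hsnd : Measurable fun z : X × NNReal => (z.2 : ENNReal) :=
    measurable_coe_nnreal_ennreal.comp measurable_snd
  -- the mean ω ↦ Λ ω (γ̂)
  set M : Ω → ENNReal := fun ω => ∫⁻ z : X × NNReal, (z.2 : ENNReal) ∂(Λ ω) with hM
  -- integrals over the product measure reduce to ρ-integrals
  have hprod : ∀ g : NNReal → ENNReal, Measurable g →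
      ∫⁻ z : X × NNReal, g z.2 ∂(G₀.prod ρm) = ∫⁻ γ, g γ ∂ρm := by
    intro g hg
    have e := MeasureTheory.lintegral_prod (μ := G₀) (ν := ρm) (fun z : X × NNReal => g z.2)
      ((hg.comp measurable_snd).aemeasurable)
    simpa using e
  -- step 1: P{Φ = k} as a lintegral
  have hΦuniv : Measurable fun ω => Φ ω Set.univ :=
    (Measure.measurable_coe MeasurableSet.univ).comp hΦmeas
  have hset : MeasurableSet {ω | Φ ω Set.univ = (k : ENNReal)} :=
    hΦuniv (measurableSet_singleton _)
  have h1 : P {ω | Φ ω Set.univ = (k : ENNReal)}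
      = ∫⁻ ω, (if Φ ω Set.univ = (k : ENNReal) then 1 else 0) * (1 : ENNReal) ∂P := by
    rw [← lintegral_indicator_one hset]
    congr 1; ext ω
    simp [Set.indicator_apply, Set.mem_setOf_eq]
  -- step 2: apply (a)
  have h2 : P {ω | Φ ω Set.univ = (k : ENNReal)}
      = ∫⁻ ω, expNeg (M ω) * (M ω) ^ k / (Nat.factorial k : ENNReal) ∂P := by
    rw [h1, ha (fun _ => 1) measurable_const]
    simp [hM]
  -- step 3: pull out 1/k!
  have hfact_ne : ((Nat.factorial k : ENNReal))⁻¹ ≠ ⊤ := by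
    simp [Nat.factorial_ne_zero]
  have h3 : P {ω | Φ ω Set.univ = (k : ENNReal)}
      = (∫⁻ ω, expNeg (M ω) * (M ω) ^ k ∂P) * (Nat.factorial k : ENNReal)⁻¹ := by
    rw [h2]
    simp_rw [div_eq_mul_inv]
    exact lintegral_mul_const' _ _ hfact_ne
  -- step 4: evaluate the moment integral
  have h4 : ∫⁻ ω, expNeg (M ω) * (M ω) ^ k ∂P
      = expNeg (∫⁻ γ : NNReal, (1 - expNeg (γ : ENNReal)) ∂ρm)
        * ∑ pt : Finpartition (Finset.univ : Finset (Fin k)),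
            ∏ J ∈ pt.parts,
              ∫⁻ γ : NNReal, expNeg (γ : ENNReal) * (γ : ENNReal) ^ J.card ∂ρm := by
    rcases Nat.eq_zero_or_pos k with hk | hk
    · subst hk
      have hsum : ∀ f : Finset (Fin 0) → ENNReal,
          ∑ pt : Finpartition (Finset.univ : Finset (Fin 0)), ∏ J ∈ pt.parts, f J = 1 := by
        intro f
        have h : (Finset.univ : Finset (Fin 0)) = ⊥ := rfl
        rw [h, Fintype.sum_unique, Finpartition.default_eq_empty]
        simp [Finpartition.empty]
      rw [hsum]
      have h0 := hΛ (fun z => (z.2 : ENNReal)) hsnd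
      rw [hprod (fun γ => 1 - expNeg (γ : ENNReal))
        (measurable_const.sub (hexpNegMeas.comp measurable_coe_nnreal_ennreal))] at h0
      simpa [hM] using h0
    · have := hb k hk (fun z => (z.2 : ENNReal)) hsnd
        (fun _ z => (z.2 : ENNReal)) (fun _ => hsnd)
      simp only [Finset.prod_const, Finset.card_univ, Fintype.card_fin] at this
      have this' : ∫⁻ ω, expNeg (M ω) * (M ω) ^ k ∂P
          = expNeg (∫⁻ z : X × NNReal, (1 - expNeg ((z.2 : ENNReal))) ∂(G₀.prod ρm))
            * ∑ pt : Finpartition (Finset.univ : Finset (Fin k)),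
                ∏ J ∈ pt.parts,
                  ∫⁻ z : X × NNReal, expNeg ((z.2 : ENNReal)) * ((z.2 : ENNReal)) ^ J.card
                    ∂(G₀.prod ρm) := this
      rw [this', hprod (fun γ => 1 - expNeg (γ : ENNReal))
        (measurable_const.sub (hexpNegMeas.comp measurable_coe_nnreal_ennreal))]
      congr 2
      funext pt
      refine Finset.prod_congr rfl fun J _ => ?_
      exact hprod (fun γ => expNeg (γ : ENNReal) * (γ : ENNReal) ^ J.card)
        ((hexpNegMeas.comp measurable_coe_nnreal_ennreal).mul
          (measurable_coe_nnreal_ennreal.pow_const _))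
  rw [h3, h4]; ring
end
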